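/- Let M₁, M₂ be ITL^e models and Z_n ⊆ ⋯ ⊆ Z_0 a bounded ◇-bisimulation. Then for all i ≤ n, if w₁ Z_i w₂, then for every formula φ in the language with atoms, ⊥, ∧, ∨, →, ◯, ◇ of length |φ| ≤ i: M₁, w₁ ⊨ φ iff M₂, w₂ ⊨ φ. -/

import Mathlib

inductive TForm : Type where
  | atom : ℕ → TForm
  | bot : TForm
  | and : TForm → TForm → TForm
  | or : TForm → TForm → TForm
  | imp : TForm → TForm → TForm
  | next : TForm → TForm
  | dia : TForm → TForm
  | box : TForm → TForm
  | untl : TForm → TForm → TForm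
  | rels : TForm → TForm → TForm

/-- Intuitionistic temporal satisfaction over a dynamic poset `(W, ≤, S)`
with valuation `V`. -/
def sat {W : Type} [PartialOrder W] (S : W → W) (V : W → ℕ → Prop) : TForm → W → Prop
  | .atom p, w => V w p
  | .bot, _ => False
  | .and φ ψ, w => sat S V φ w ∧ sat S V ψ w
  | .or φ ψ, w => sat S V φ w ∨ sat S V ψ w
  | .imp φ ψ, w => ∀ v, w ≤ v → sat S V φ v → sat S V ψ v
  | .next φ, w => sat S V φ (S w)
  | .dia φ, w => ∃ k, sat S V φ (S^[k] w)
  | .box φ, w => ∀ k, sat S V φ (S^[k] w)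
  | .untl φ ψ, w => ∃ k, sat S V ψ (S^[k] w) ∧ ∀ i < k, sat S V φ (S^[i] w)
  | .rels φ ψ, w => ∀ k, sat S V ψ (S^[k] w) ∨ ∃ i < k, sat S V φ (S^[i] w)

/-- The length (number of connectives) of a formula. -/
def len : TForm → ℕ
  | .atom _ => 0
  | .bot => 0
  | .and φ ψ => 1 + len φ + len ψ
  | .or φ ψ => 1 + len φ + len ψ
  | .imp φ ψ => 1 + len φ + len ψ
  | .next φ => 1 + len φ
  | .dia φ => 1 + len φ
  | .box φ => 1 + len φ
  | .untl φ ψ => 1 + len φ + len ψ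
  | .rels φ ψ => 1 + len φ + len ψ

/-- Formulas using only the connectives ⊥, ∧, ∨, →, and {next, dia}. -/
def LangDia : TForm → Prop
  | .atom _ => True
  | .bot => True
  | .and φ ψ => LangDia φ ∧ LangDia ψ
  | .or φ ψ => LangDia φ ∧ LangDia ψ
  | .imp φ ψ => LangDia φ ∧ LangDia ψ
  | .next φ => LangDia φ
  | .dia φ => LangDia φ
  | .box _ => False
  | .untl _ _ => False
  | .rels _ _ => False

theorem sat_monotone {W : Type} [PartialOrder W] {S : W → W} {V : W → ℕ → Prop}
    (hS : Monotone S) (hV : Monotone V) (φ : TForm) : Monotone (sat S V φ) := by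
  induction φ with
  | atom p => exact fun _ _ h => hV h p
  | bot => exact fun _ _ _ => id
  | and φ ψ ihφ ihψ => exact fun _ _ h => And.imp (ihφ h) (ihψ h)
  | or φ ψ ihφ ihψ => exact fun _ _ h => Or.imp (ihφ h) (ihψ h)
  | imp φ ψ => exact fun _ _ h hw u hu => hw u (h.trans hu)
  | next φ ih => exact fun _ _ h => ih (hS h)
  | dia φ ih => exact fun _ _ h => Exists.imp fun k => ih (hS.iterate k h)
  | box φ ih => exact fun _ _ h hw k => ih (hS.iterate k h) (hw k)
  | untl φ ψ ihφ ihψ =>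
    exact fun _ _ h => Exists.imp fun k =>
      And.imp (ihψ (hS.iterate k h)) (forall₂_imp fun i _ => ihφ (hS.iterate i h))
  | rels φ ψ ihφ ihψ =>
    exact fun _ _ h hw k => (hw k).imp (ihψ (hS.iterate k h))
      (Exists.imp fun i => And.imp_right (ihφ (hS.iterate i h)))

structure IsBoundedDiaBisim {W₁ W₂ : Type} [PartialOrder W₁] [PartialOrder W₂]
    (S₁ : W₁ → W₁) (V₁ : W₁ → ℕ → Prop) (S₂ : W₂ → W₂) (V₂ : W₂ → ℕ → Prop)
    (n : ℕ) (Z : ℕ → W₁ → W₂ → Prop) : Prop where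
  of_succ : ∀ i < n, ∀ w₁ w₂, Z (i+1) w₁ w₂ → Z i w₁ w₂
  atoms : ∀ i < n, ∀ w₁ w₂, Z i w₁ w₂ → ∀ p, V₁ w₁ p ↔ V₂ w₂ p
  forth_imp : ∀ i < n, ∀ w₁ w₂, Z (i+1) w₁ w₂ →
    ∀ v₁, w₁ ≤ v₁ → ∃ v₂, w₂ ≤ v₂ ∧ Z i v₁ v₂
  back_imp : ∀ i < n, ∀ w₁ w₂, Z (i+1) w₁ w₂ →
    ∀ v₂, w₂ ≤ v₂ → ∃ v₁, w₁ ≤ v₁ ∧ Z i v₁ v₂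
  next : ∀ i < n, ∀ w₁ w₂, Z (i+1) w₁ w₂ → Z i (S₁ w₁) (S₂ w₂)
  forth_dia : ∀ i < n, ∀ w₁ w₂, Z (i+1) w₁ w₂ → ∀ k₁ : ℕ, ∃ k₂ : ℕ, ∃ v₁ v₂,
    v₂ ≤ S₂^[k₂] w₂ ∧ S₁^[k₁] w₁ ≤ v₁ ∧ Z i v₁ v₂
  back_dia : ∀ i < n, ∀ w₁ w₂, Z (i+1) w₁ w₂ → ∀ k₂ : ℕ, ∃ k₁ : ℕ, ∃ v₁ v₂,
    v₁ ≤ S₁^[k₁] w₁ ∧ S₂^[k₂] w₂ ≤ v₂ ∧ Z i v₁ v₂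

namespace IsBoundedDiaBisim

variable {W₁ W₂ : Type} [PartialOrder W₁] [PartialOrder W₂]
  {S₁ : W₁ → W₁} {V₁ : W₁ → ℕ → Prop} {S₂ : W₂ → W₂} {V₂ : W₂ → ℕ → Prop}
  {n : ℕ} {Z : ℕ → W₁ → W₂ → Prop} {i j : ℕ} {w₁ : W₁} {w₂ : W₂} {φ ψ : TForm}

theorem atom_iff (hZ : IsBoundedDiaBisim S₁ V₁ S₂ V₂ n Z) (hn : 0 < n) (hi : i ≤ n)
    (h : Z i w₁ w₂) (p : ℕ) : V₁ w₁ p ↔ V₂ w₂ p := by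
  rcases hi.lt_or_eq with hi | rfl
  · exact hZ.atoms i hi w₁ w₂ h p
  · obtain ⟨j, rfl⟩ := Nat.exists_eq_add_one_of_ne_zero hn.ne'
    exact hZ.atoms j j.lt_succ_self w₁ w₂ (hZ.of_succ j j.lt_succ_self w₁ w₂ h) p

theorem sat_imp_iff (hZ : IsBoundedDiaBisim S₁ V₁ S₂ V₂ n Z) (hj : j < n) (h : Z (j+1) w₁ w₂)
    (ihφ : ∀ v₁ v₂, Z j v₁ v₂ → (sat S₁ V₁ φ v₁ ↔ sat S₂ V₂ φ v₂))
    (ihψ : ∀ v₁ v₂, Z j v₁ v₂ → (sat S₁ V₁ ψ v₁ ↔ sat S₂ V₂ ψ v₂)) :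
    sat S₁ V₁ (.imp φ ψ) w₁ ↔ sat S₂ V₂ (.imp φ ψ) w₂ := by
  constructor
  · intro himp v₂ hv₂ hφ
    obtain ⟨v₁, hv₁, hv⟩ := hZ.back_imp j hj w₁ w₂ h v₂ hv₂
    exact (ihψ v₁ v₂ hv).1 (himp v₁ hv₁ ((ihφ v₁ v₂ hv).2 hφ))
  · intro himp v₁ hv₁ hφ
    obtain ⟨v₂, hv₂, hv⟩ := hZ.forth_imp j hj w₁ w₂ h v₁ hv₁
    exact (ihψ v₁ v₂ hv).2 (himp v₂ hv₂ ((ihφ v₁ v₂ hv).1 hφ))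

/-- The ◇-clauses only provide a pair below `S^k w` on one side and above it on the other;
monotonicity of truth sets bridges the gap. -/
theorem sat_dia_iff (hZ : IsBoundedDiaBisim S₁ V₁ S₂ V₂ n Z)
    (hS₁ : Monotone S₁) (hV₁ : Monotone V₁) (hS₂ : Monotone S₂) (hV₂ : Monotone V₂)
    (hj : j < n) (h : Z (j+1) w₁ w₂)
    (ih : ∀ v₁ v₂, Z j v₁ v₂ → (sat S₁ V₁ φ v₁ ↔ sat S₂ V₂ φ v₂)) :
    sat S₁ V₁ (.dia φ) w₁ ↔ sat S₂ V₂ (.dia φ) w₂ := by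
  constructor
  · rintro ⟨k₁, hk₁⟩
    obtain ⟨k₂, v₁, v₂, hv₂, hv₁, hv⟩ := hZ.forth_dia j hj w₁ w₂ h k₁
    exact ⟨k₂, sat_monotone hS₂ hV₂ φ hv₂ ((ih v₁ v₂ hv).1 (sat_monotone hS₁ hV₁ φ hv₁ hk₁))⟩
  · rintro ⟨k₂, hk₂⟩
    obtain ⟨k₁, v₁, v₂, hv₁, hv₂, hv⟩ := hZ.back_dia j hj w₁ w₂ h k₂
    exact ⟨k₁, sat_monotone hS₁ hV₁ φ hv₁ ((ih v₁ v₂ hv).2 (sat_monotone hS₂ hV₂ φ hv₂ hk₂))⟩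

theorem sat_iff_sat (hZ : IsBoundedDiaBisim S₁ V₁ S₂ V₂ n Z) (hn : 0 < n)
    (hS₁ : Monotone S₁) (hV₁ : Monotone V₁) (hS₂ : Monotone S₂) (hV₂ : Monotone V₂)
    (hi : i ≤ n) (h : Z i w₁ w₂) (hφ : LangDia φ) (hlen : len φ ≤ i) :
    sat S₁ V₁ φ w₁ ↔ sat S₂ V₂ φ w₂ := by
  induction φ generalizing i w₁ w₂ with
  | atom p => exact hZ.atom_iff hn hi h p
  | bot => exact Iff.rfl
  | and φ ψ ihφ ihψ =>
    simp only [len] at hlen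
    exact and_congr (ihφ hi h hφ.1 (by omega)) (ihψ hi h hφ.2 (by omega))
  | or φ ψ ihφ ihψ =>
    simp only [len] at hlen
    exact or_congr (ihφ hi h hφ.1 (by omega)) (ihψ hi h hφ.2 (by omega))
  | imp φ ψ ihφ ihψ =>
    simp only [len] at hlen
    obtain ⟨j, rfl⟩ := Nat.exists_eq_add_one_of_ne_zero (by omega : i ≠ 0)
    exact hZ.sat_imp_iff (by omega) h
      (fun _ _ hv => ihφ (by omega) hv hφ.1 (by omega))
      (fun _ _ hv => ihψ (by omega) hv hφ.2 (by omega))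
  | next φ ih =>
    simp only [len] at hlen
    obtain ⟨j, rfl⟩ := Nat.exists_eq_add_one_of_ne_zero (by omega : i ≠ 0)
    exact ih (by omega) (hZ.next j (by omega) w₁ w₂ h) hφ (by omega)
  | dia φ ih =>
    simp only [len] at hlen
    obtain ⟨j, rfl⟩ := Nat.exists_eq_add_one_of_ne_zero (by omega : i ≠ 0)
    exact hZ.sat_dia_iff hS₁ hV₁ hS₂ hV₂ (by omega) h
      (fun _ _ hv => ih (by omega) hv hφ (by omega))
  | box | untl | rels => exact hφ.elim

end IsBoundedDiaBisim

/-- Bounded ◇-bisimulations preserve ◇-formulas of bounded length. -/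
theorem dia_bisim_invariance {W₁ W₂ : Type} [PartialOrder W₁] [PartialOrder W₂]
    (S₁ : W₁ → W₁) (V₁ : W₁ → ℕ → Prop) (S₂ : W₂ → W₂) (V₂ : W₂ → ℕ → Prop)
    (hS₁ : ∀ w v : W₁, w ≤ v → S₁ w ≤ S₁ v)
    (hV₁ : ∀ w v : W₁, w ≤ v → ∀ p, V₁ w p → V₁ v p)
    (hS₂ : ∀ w v : W₂, w ≤ v → S₂ w ≤ S₂ v)
    (hV₂ : ∀ w v : W₂, w ≤ v → ∀ p, V₂ w p → V₂ v p)
    (n : ℕ) (hn : 0 < n) (Z : ℕ → W₁ → W₂ → Prop)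
    (hchain : ∀ i < n, ∀ w₁ w₂, Z (i+1) w₁ w₂ → Z i w₁ w₂)
    (hatoms : ∀ i < n, ∀ w₁ w₂, Z i w₁ w₂ → ∀ p, V₁ w₁ p ↔ V₂ w₂ p)
    (hforth_imp : ∀ i < n, ∀ w₁ w₂, Z (i+1) w₁ w₂ →
      ∀ v₁, w₁ ≤ v₁ → ∃ v₂, w₂ ≤ v₂ ∧ Z i v₁ v₂)
    (hback_imp : ∀ i < n, ∀ w₁ w₂, Z (i+1) w₁ w₂ →
      ∀ v₂, w₂ ≤ v₂ → ∃ v₁, w₁ ≤ v₁ ∧ Z i v₁ v₂)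
    (hnext : ∀ i < n, ∀ w₁ w₂, Z (i+1) w₁ w₂ → Z i (S₁ w₁) (S₂ w₂))
    (hforth_dia : ∀ i < n, ∀ w₁ w₂, Z (i+1) w₁ w₂ → ∀ k₁ : ℕ, ∃ k₂ : ℕ, ∃ v₁ v₂,
      v₂ ≤ S₂^[k₂] w₂ ∧ S₁^[k₁] w₁ ≤ v₁ ∧ Z i v₁ v₂)
    (hback_dia : ∀ i < n, ∀ w₁ w₂, Z (i+1) w₁ w₂ → ∀ k₂ : ℕ, ∃ k₁ : ℕ, ∃ v₁ v₂,
      v₁ ≤ S₁^[k₁] w₁ ∧ S₂^[k₂] w₂ ≤ v₂ ∧ Z i v₁ v₂) :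
    ∀ i ≤ n, ∀ w₁ w₂, Z i w₁ w₂ → ∀ φ, LangDia φ → len φ ≤ i →
      (sat S₁ V₁ φ w₁ ↔ sat S₂ V₂ φ w₂) := by
  have hZ : IsBoundedDiaBisim S₁ V₁ S₂ V₂ n Z :=
    ⟨hchain, hatoms, hforth_imp, hback_imp, hnext, hforth_dia, hback_dia⟩
  intro i hi w₁ w₂ h φ hφ hlen
  exact hZ.sat_iff_sat hn (fun _ _ => hS₁ _ _) (fun _ _ h => hV₁ _ _ h)
    (fun _ _ => hS₂ _ _) (fun _ _ h => hV₂ _ _ h) hi h hφ hlen
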